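/- arXiv:2002.04549 — 5 statements merged into one kernel-verified Lean document; each statement's English description precedes it below -/
import Mathlib

section
/- Let a, b : ℝ → ℝ be continuous with a > 0 > b, h > 0, and assume a_0 h > -b_0 √(1+h²) (with a_0, b_0 as lower bounds of a, b). Then there exists a unique c(h) > 0 such that ∫_{-h}^{h} a(r)/((1+r²)(c(h) - b(r)√(1+r²))) dr = 2. -/
open MeasureTheory intervalIntegral

theorem stmt6 (a b : ℝ → ℝ) (ha : Continuous a) (hb : Continuous b)
    (h : ℝ) (hh : 0 < h) (a0 b0 : ℝ) (ha0 : 0 < a0) (hb0 : b0 < 0)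
    (haa : ∀ r : ℝ, a0 ≤ a r) (hbb : ∀ r : ℝ, b0 ≤ b r ∧ b r < 0)
    (hcond : a0 * h > -b0 * Real.sqrt (1 + h^2)) :
    ∃! c : ℝ, 0 < c ∧
      (∫ r in (-h)..h, a r / ((1 + r^2) * (c - b r * Real.sqrt (1 + r^2)))) = 2 := by
  have hs : ∀ r : ℝ, 0 < Real.sqrt (1 + r ^ 2) := fun r => Real.sqrt_pos.2 (by positivity)
  have hbneg : ∀ r : ℝ, b r * Real.sqrt (1 + r ^ 2) < 0 :=
    fun r => mul_neg_of_neg_of_pos (hbb r).2 (hs r)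
  set f : ℝ → ℝ → ℝ :=
    fun c r => a r / ((1 + r ^ 2) * (max c 0 - b r * Real.sqrt (1 + r ^ 2))) with hf
  have hDpos : ∀ c r : ℝ, 0 < (1 + r ^ 2) * (max c 0 - b r * Real.sqrt (1 + r ^ 2)) := by
    intro c r
    have h1 : (0:ℝ) ≤ max c 0 := le_max_right _ _
    have := hbneg r
    have : 0 < max c 0 - b r * Real.sqrt (1 + r ^ 2) := by linarith
    positivity
  have hcontf : Continuous (Function.uncurry f) := by
    apply Continuous.div (ha.comp continuous_snd)
    · exact (continuous_const.add (continuous_snd.pow 2)).mul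
        ((continuous_fst.max continuous_const).sub
          ((hb.comp continuous_snd).mul
            (Real.continuous_sqrt.comp (continuous_const.add (continuous_snd.pow 2)))))
    · exact fun p => ne_of_gt (hDpos p.1 p.2)
  have hcontfc : ∀ c : ℝ, Continuous fun r => f c r := by
    intro c
    exact hcontf.comp (continuous_const.prodMk continuous_id)
  set G : ℝ → ℝ := fun c => ∫ r in (-h)..h, f c r with hG
  have hGcont : Continuous G :=
    intervalIntegral.continuous_parametric_intervalIntegral_of_continuous' hcontf _ _
  -- strict antitone on [0, ∞)
  have hanti : StrictAntiOn G (Set.Ici 0) := by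
    intro c1 hc1 c2 hc2 hlt
    have hpoint : ∀ r : ℝ, f c2 r < f c1 r := by
      intro r
      apply div_lt_div_of_pos_left (lt_of_lt_of_le ha0 (haa r)) (hDpos c1 r)
      have : max c1 0 < max c2 0 := by
        rw [max_eq_left (Set.mem_Ici.1 hc1), max_eq_left (le_trans (Set.mem_Ici.1 hc1) hlt.le)]
        exact hlt
      have h2 : (0:ℝ) < 1 + r ^ 2 := by positivity
      nlinarith
    have hint1 : IntervalIntegrable (fun r => f c1 r) volume (-h) h :=
      (hcontfc c1).intervalIntegrable _ _
    have hint2 : IntervalIntegrable (fun r => f c2 r) volume (-h) h :=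
      (hcontfc c2).intervalIntegrable _ _
    have hpos : 0 < ∫ r in (-h)..h, (f c1 r - f c2 r) := by
      apply intervalIntegral.intervalIntegral_pos_of_pos (hint1.sub hint2)
        (fun x => sub_pos.2 (hpoint x)) (by linarith)
    have := intervalIntegral.integral_sub hint1 hint2
    simp only [hG]
    rw [this] at hpos
    linarith
  -- value at 0 is > 2
  have hanti' : ∀ x : ℝ, HasDerivAt (fun r : ℝ => r / Real.sqrt (1 + r ^ 2))
      (1 / ((1 + x ^ 2) * Real.sqrt (1 + x ^ 2))) x := by
    intro x
    have h1 : (0:ℝ) < 1 + x ^ 2 := by positivity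
    have hsq : HasDerivAt (fun r : ℝ => 1 + r ^ 2) (2 * x) x := by
      simpa using (hasDerivAt_pow 2 x).const_add 1
    have hsqrt : HasDerivAt (fun r : ℝ => Real.sqrt (1 + r ^ 2))
        (1 / (2 * Real.sqrt (1 + x ^ 2)) * (2 * x)) x :=
      (Real.hasDerivAt_sqrt (ne_of_gt h1)).comp x hsq
    have := (hasDerivAt_id x).div hsqrt (ne_of_gt (hs x))
    refine this.congr_deriv ?_
    have hms : Real.sqrt (1 + x ^ 2) * Real.sqrt (1 + x ^ 2) = 1 + x ^ 2 :=
      Real.mul_self_sqrt h1.le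
    have hSpos := hs x
    simp only [id]
    field_simp
    nlinarith [hms, hSpos, h1, mul_pos h1 hSpos]
  have hint_aux : ∀ c1 c2 : ℝ,
      (∫ r in c1..c2, 1 / ((1 + r ^ 2) * Real.sqrt (1 + r ^ 2)))
        = c2 / Real.sqrt (1 + c2 ^ 2) - c1 / Real.sqrt (1 + c1 ^ 2) := by
    intro c1 c2
    apply intervalIntegral.integral_eq_sub_of_hasDerivAt (fun x _ => hanti' x)
    apply Continuous.intervalIntegrable
    apply continuous_const.div
    · exact (continuous_const.add (continuous_id.pow 2)).mul
        (Real.continuous_sqrt.comp (continuous_const.add (continuous_id.pow 2)))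
    · intro x; exact ne_of_gt (mul_pos (by positivity) (hs x))
  have hG0 : 2 < G 0 := by
    have hL : ∀ r ∈ Set.Icc (-h) h,
        (a0 / (-b0)) * (1 / ((1 + r ^ 2) * Real.sqrt (1 + r ^ 2))) ≤ f 0 r := by
      intro r _
      have hb0' : (0:ℝ) < -b0 := by linarith
      have hD0 : 0 < (1 + r ^ 2) * (max (0:ℝ) 0 - b r * Real.sqrt (1 + r ^ 2)) := hDpos 0 r
      have key : (1 + r ^ 2) * (max (0:ℝ) 0 - b r * Real.sqrt (1 + r ^ 2))
          ≤ (1 + r ^ 2) * ((-b0) * Real.sqrt (1 + r ^ 2)) := by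
        have := (hbb r).1
        have := hs r
        have h1 : (0:ℝ) < 1 + r ^ 2 := by positivity
        have hmul : -b r * Real.sqrt (1 + r ^ 2) ≤ -b0 * Real.sqrt (1 + r ^ 2) :=
          mul_le_mul_of_nonneg_right (by linarith [(hbb r).1]) (hs r).le
        simp only [max_self]
        nlinarith [mul_le_mul_of_nonneg_left hmul h1.le]
      have : a0 / ((1 + r ^ 2) * ((-b0) * Real.sqrt (1 + r ^ 2))) ≤ f 0 r :=
        div_le_div₀ (le_of_lt (lt_of_lt_of_le ha0 (haa r))) (haa r) hD0 key
      calc (a0 / (-b0)) * (1 / ((1 + r ^ 2) * Real.sqrt (1 + r ^ 2)))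
          = a0 / ((1 + r ^ 2) * ((-b0) * Real.sqrt (1 + r ^ 2))) := by
            field_simp
        _ ≤ f 0 r := this
    have hintL : IntervalIntegrable
        (fun r => (a0 / (-b0)) * (1 / ((1 + r ^ 2) * Real.sqrt (1 + r ^ 2)))) volume (-h) h := by
      apply Continuous.intervalIntegrable
      apply continuous_const.mul
      apply continuous_const.div
      · exact (continuous_const.add (continuous_id.pow 2)).mul
          (Real.continuous_sqrt.comp (continuous_const.add (continuous_id.pow 2)))
      · intro x; exact ne_of_gt (mul_pos (by positivity) (hs x))
    have hmono : (∫ r in (-h)..h, (a0 / (-b0)) * (1 / ((1 + r ^ 2) * Real.sqrt (1 + r ^ 2))))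
        ≤ G 0 := by
      apply intervalIntegral.integral_mono_on (by linarith) hintL
        ((hcontfc 0).intervalIntegrable _ _) hL
    have hval : (∫ r in (-h)..h, (a0 / (-b0)) * (1 / ((1 + r ^ 2) * Real.sqrt (1 + r ^ 2))))
        = (a0 / (-b0)) * (2 * h / Real.sqrt (1 + h ^ 2)) := by
      rw [intervalIntegral.integral_const_mul, hint_aux]
      have : (-h : ℝ) ^ 2 = h ^ 2 := by ring
      rw [this]
      ring
    have hS : (0:ℝ) < Real.sqrt (1 + h ^ 2) := hs h
    have hb0' : (0:ℝ) < -b0 := by linarith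
    have h2 : 2 < (a0 / (-b0)) * (2 * h / Real.sqrt (1 + h ^ 2)) := by
      rw [div_mul_div_comm, lt_div_iff₀ (by positivity)]
      have : -b0 * Real.sqrt (1 + h ^ 2) < a0 * h := by
        have := hcond
        simpa [pow_two] using this
      nlinarith
    linarith [hval ▸ hmono]
  -- large value
  obtain ⟨x0, hx0mem, hx0⟩ := isCompact_Icc.exists_isMaxOn
    (Set.nonempty_Icc.2 (by linarith : (-h:ℝ) ≤ h)) ha.continuousOn
  set A : ℝ := a x0 with hA
  have hApos : 0 < A := lt_of_lt_of_le ha0 (haa x0)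
  set C : ℝ := 2 * h * A with hC
  have hCpos : 0 < C := by positivity
  have hGC : G C < 2 := by
    have hUB : ∀ r ∈ Set.Icc (-h) h, f C r ≤ A / C := by
      intro r hr
      have hD := hDpos C r
      have h1 : (1:ℝ) ≤ 1 + r ^ 2 := by nlinarith
      have h2 : C ≤ max C 0 - b r * Real.sqrt (1 + r ^ 2) := by
        have := hbneg r
        rw [max_eq_left hCpos.le]
        linarith
      have hDge : C ≤ (1 + r ^ 2) * (max C 0 - b r * Real.sqrt (1 + r ^ 2)) := by
        nlinarith
      exact div_le_div₀ (hApos.le) (hx0 hr) hCpos hDge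
    have hmono : G C ≤ ∫ _ in (-h)..h, A / C :=
      intervalIntegral.integral_mono_on (by linarith)
        ((hcontfc C).intervalIntegrable _ _)
        (intervalIntegrable_const) hUB
    have : (∫ _ in (-h)..h, A / C) = (h - (-h)) * (A / C) := by
      simp [smul_eq_mul]; ring
    rw [this] at hmono
    have hval : (h - (-h)) * (A / C) = 1 := by
      rw [show (h - (-h)) * (A / C) = (2 * h * A) / C by ring, hC,
        div_self (ne_of_gt (by positivity))]
    rw [hval] at hmono
    linarith
  -- IVT
  have h0C : (0:ℝ) ≤ C := hCpos.le
  have hmem : (2:ℝ) ∈ Set.Icc (G C) (G 0) := ⟨hGC.le, hG0.le⟩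
  obtain ⟨c, hcmem, hGc⟩ := intermediate_value_Icc' h0C hGcont.continuousOn hmem
  have hc0 : 0 < c := by
    rcases lt_or_eq_of_le hcmem.1 with h' | h'
    · exact h'
    · exfalso; rw [← h'] at hGc; linarith
  have hGeq : ∀ y : ℝ, 0 ≤ y →
      (∫ r in (-h)..h, a r / ((1 + r ^ 2) * (y - b r * Real.sqrt (1 + r ^ 2)))) = G y := by
    intro y hy
    apply intervalIntegral.integral_congr
    intro r _
    simp [hf, max_eq_left hy]
  refine ⟨c, ⟨hc0, ?_⟩, ?_⟩
  · rw [show (fun r : ℝ => a r / ((1 + r^2) * (c - b r * Real.sqrt (1 + r^2))))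
      = (fun r : ℝ => a r / ((1 + r ^ 2) * (c - b r * Real.sqrt (1 + r ^ 2)))) from rfl]
    rw [hGeq c hc0.le]; exact hGc
  · rintro y ⟨hy0, hy⟩
    have hGy : G y = 2 := by rw [← hGeq y hy0.le]; exact hy
    have : G y = G c := by rw [hGy, hGc]
    exact hanti.injOn (Set.mem_Ici.2 hy0.le) (Set.mem_Ici.2 hc0.le) this
end

section
/- If h₁ < h₂ both satisfy the solvability condition and c(h₁), c(h₂) are the unique constants with d_{h₁}(c(h₁)) = d_{h₂}(c(h₂)) = 2, then c(h₁) < c(h₂); i.e., the wave speed c(h) is strictly increasing in h. -/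
open MeasureTheory intervalIntegral

theorem stmt8 (a b : ℝ → ℝ) (ha : Continuous a) (hb : Continuous b)
    (hab : ∀ r : ℝ, 0 < a r ∧ b r < 0)
    (h₁ h₂ : ℝ) (hh₁ : 0 < h₁) (hlt : h₁ < h₂)
    (c₁ c₂ : ℝ) (hc₁ : 0 < c₁) (hc₂ : 0 < c₂)
    (heq₁ : (∫ r in (-h₁)..h₁, a r / ((1 + r^2) * (c₁ - b r * Real.sqrt (1 + r^2)))) = 2)
    (heq₂ : (∫ r in (-h₂)..h₂, a r / ((1 + r^2) * (c₂ - b r * Real.sqrt (1 + r^2)))) = 2) :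
    c₁ < c₂ := by
  by_contra hcon
  push_neg at hcon
  -- hcon : c₂ ≤ c₁
  set f₁ : ℝ → ℝ := fun r => a r / ((1 + r^2) * (c₁ - b r * Real.sqrt (1 + r^2))) with hf₁
  set f₂ : ℝ → ℝ := fun r => a r / ((1 + r^2) * (c₂ - b r * Real.sqrt (1 + r^2))) with hf₂
  have hsq : ∀ r : ℝ, (0:ℝ) < 1 + r^2 := fun r => by positivity
  have hden : ∀ (c : ℝ), 0 < c → ∀ r : ℝ, 0 < c - b r * Real.sqrt (1 + r^2) := by
    intro c hc r
    have hb0 := (hab r).2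
    have hs : 0 < Real.sqrt (1 + r^2) := Real.sqrt_pos.mpr (hsq r)
    nlinarith [mul_pos (neg_pos.mpr hb0) hs]
  have hpos : ∀ (c : ℝ), 0 < c → ∀ r : ℝ,
      0 < a r / ((1 + r^2) * (c - b r * Real.sqrt (1 + r^2))) := by
    intro c hc r
    exact div_pos (hab r).1 (mul_pos (hsq r) (hden c hc r))
  have hcont : ∀ (c : ℝ), 0 < c →
      Continuous (fun r => a r / ((1 + r^2) * (c - b r * Real.sqrt (1 + r^2)))) := by
    intro c hc
    apply ha.div
    · exact (continuous_const.add (continuous_pow 2)).mul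
        (continuous_const.sub (hb.mul ((continuous_const.add (continuous_pow 2)).sqrt)))
    · intro r
      exact ne_of_gt (mul_pos (hsq r) (hden c hc r))
  have hint : ∀ (c : ℝ), 0 < c → ∀ x y : ℝ,
      IntervalIntegrable (fun r => a r / ((1 + r^2) * (c - b r * Real.sqrt (1 + r^2))))
        volume x y := fun c hc x y => ((hcont c hc).intervalIntegrable x y)
  -- pointwise f₁ ≤ f₂
  have hmono : ∀ r : ℝ, f₁ r ≤ f₂ r := by
    intro r
    apply div_le_div_of_nonneg_left (hab r).1.le (mul_pos (hsq r) (hden c₂ hc₂ r))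
    have := hden c₁ hc₁ r
    nlinarith [hsq r, hden c₂ hc₂ r]
  have step1 : (∫ r in (-h₁)..h₁, f₁ r) ≤ ∫ r in (-h₁)..h₁, f₂ r := by
    apply intervalIntegral.integral_mono (by linarith) (hint c₁ hc₁ _ _) (hint c₂ hc₂ _ _)
    intro r; exact hmono r
  have step2 : (∫ r in (-h₁)..h₁, f₂ r) < ∫ r in (-h₂)..h₂, f₂ r := by
    have hsplit : (∫ r in (-h₂)..h₂, f₂ r) =
        (∫ r in (-h₂)..(-h₁), f₂ r) + (∫ r in (-h₁)..h₁, f₂ r) + (∫ r in h₁..h₂, f₂ r) := by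
      rw [intervalIntegral.integral_add_adjacent_intervals (hint c₂ hc₂ _ _) (hint c₂ hc₂ _ _),
        intervalIntegral.integral_add_adjacent_intervals (hint c₂ hc₂ _ _) (hint c₂ hc₂ _ _)]
    have p1 : 0 < ∫ r in (-h₂)..(-h₁), f₂ r :=
      intervalIntegral.intervalIntegral_pos_of_pos_on (hint c₂ hc₂ _ _)
        (fun x _ => hpos c₂ hc₂ x) (by linarith)
    have p2 : 0 < ∫ r in h₁..h₂, f₂ r :=
      intervalIntegral.intervalIntegral_pos_of_pos_on (hint c₂ hc₂ _ _)
        (fun x _ => hpos c₂ hc₂ x) hlt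
    linarith
  rw [heq₁] at step1
  rw [heq₂] at step2
  linarith
end

section
/- Let a, b be continuous with a > 0 > b and suppose, for lower bounds a_0 > 0 of a and b_0 < 0 of b, that a_0 > -b_0. Define d(c) = ∫_{-∞}^{∞} a(r)/((1+r²)(c - b(r)√(1+r²))) dr for c > 0. Then there exists a unique c̄ > 0 with d(c̄) = 2, and moreover 0 < c̄ < a⁰π/2 where a⁰ = sup a. -/
open MeasureTheory

lemma stmt13_integral_lt {f g : ℝ → ℝ} (hf : Integrable f) (hg : Integrable g)
    (hfg : ∀ r, f r < g r) : (∫ r, f r) < ∫ r, g r := by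
  have h0 : 0 < ∫ r, (g r - f r) := by
    refine (integral_pos_iff_support_of_nonneg
      (fun r => sub_nonneg.2 (hfg r).le) (hg.sub hf)).2 ?_
    have hsupp : Function.support (fun r => g r - f r) = Set.univ :=
      Set.eq_univ_of_forall fun r => sub_ne_zero.2 (hfg r).ne'
    rw [hsupp]
    simp
  rw [integral_sub hg hf] at h0
  linarith

lemma stmt13_hasDeriv (x : ℝ) :
    HasDerivAt (fun r : ℝ => r / Real.sqrt (1 + r^2))
      (1 / ((1 + x^2) * Real.sqrt (1 + x^2))) x := by
  have h1x : (0:ℝ) < 1 + x^2 := by positivity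
  have hs0 : 0 < Real.sqrt (1 + x^2) := Real.sqrt_pos.2 h1x
  have hs2 : Real.sqrt (1 + x^2) ^ 2 = 1 + x ^ 2 := Real.sq_sqrt h1x.le
  have h1 : HasDerivAt (fun r : ℝ => 1 + r^2) (2*x) x := by
    simpa using ((hasDerivAt_pow 2 x).const_add 1)
  have h2 : HasDerivAt (fun r : ℝ => Real.sqrt (1 + r^2))
      (1 / (2 * Real.sqrt (1 + x^2)) * (2*x)) x :=
    (Real.hasDerivAt_sqrt h1x.ne').comp x h1
  have h3 := (hasDerivAt_id x).div h2 hs0.ne'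
  refine h3.congr_deriv (Eq.symm ?_)
  field_simp
  simp only [id_eq]
  linear_combination (-x^2) * hs2

lemma stmt13_arith (a0 b0 : ℝ) (ha0 : 0 < a0) (hb0 : b0 < 0) (hcond : a0 > -b0) :
    (a0 / ((a0 + b0)/2 - b0)) * (2 * ((a0 - b0) / (2 * a0))) = 2 := by
  have h1 : ((a0 + b0)/2 - b0 : ℝ) ≠ 0 := by intro h; nlinarith
  have h2 : (a0 : ℝ) ≠ 0 := ha0.ne'
  have h3 : (-(a0*b0*2) + a0^2*2 : ℝ) ≠ 0 := by nlinarith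
  field_simp
  rw [div_eq_iff (by intro h; nlinarith : (a0 + b0 - b0 * 2 : ℝ) ≠ 0)]
  ring

noncomputable def stmt13F (a b : ℝ → ℝ) (c r : ℝ) : ℝ :=
  a r / ((1 + r^2) * (c - b r * Real.sqrt (1 + r^2)))

set_option maxHeartbeats 1000000 in
lemma stmt13_main (a b : ℝ → ℝ) (ha : Continuous a) (hb : Continuous b)
    (a0 b0 aSup : ℝ) (ha0 : 0 < a0) (hb0 : b0 < 0)
    (haa : ∀ r : ℝ, a0 ≤ a r ∧ a r ≤ aSup) (hbb : ∀ r : ℝ, b0 ≤ b r ∧ b r < 0)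
    (hcond : a0 > -b0) :
    (∃! c : ℝ, 0 < c ∧ (∫ r : ℝ, stmt13F a b c r) = 2) ∧
    ∀ c : ℝ, 0 < c → (∫ r : ℝ, stmt13F a b c r) = 2 → c < aSup * Real.pi / 2 := by
  have ha0S : a0 ≤ aSup := le_trans (haa 0).1 (haa 0).2
  have haSup : 0 < aSup := lt_of_lt_of_le ha0 ha0S
  have h1r : ∀ r : ℝ, (0:ℝ) < 1 + r^2 := fun r => by positivity
  have hs0 : ∀ r : ℝ, 0 < Real.sqrt (1 + r^2) := fun r => Real.sqrt_pos.2 (h1r r)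
  have hs1 : ∀ r : ℝ, 1 ≤ Real.sqrt (1 + r^2) :=
    fun r => Real.one_le_sqrt.2 (by nlinarith [sq_nonneg r])
  have hdenpos : ∀ c r : ℝ, 0 < c → c < c - b r * Real.sqrt (1 + r^2) := by
    intro c r hc
    nlinarith [hs0 r, (hbb r).2]
  have hFpos : ∀ c r : ℝ, 0 < c → 0 < stmt13F a b c r := by
    intro c r hc
    exact div_pos (lt_of_lt_of_le ha0 (haa r).1)
      (mul_pos (h1r r) (hc.trans (hdenpos c r hc)))
  have hFle : ∀ c r : ℝ, 0 < c → stmt13F a b c r ≤ aSup / c * (1 + r^2)⁻¹ := by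
    intro c r hc
    have e : aSup / c * (1 + r^2)⁻¹ = aSup / (c * (1 + r^2)) := by
      field_simp
    rw [e]
    refine div_le_div₀ haSup.le (haa r).2 (by positivity) ?_
    nlinarith [hdenpos c r hc, h1r r]
  have hcontden : Continuous (fun r : ℝ => 1 + r^2) :=
    continuous_const.add (continuous_pow 2)
  have hcontF : ∀ c : ℝ, 0 < c → Continuous (stmt13F a b c) := by
    intro c hc
    unfold stmt13F
    refine ha.div (hcontden.mul (continuous_const.sub (hb.mul hcontden.sqrt))) ?_
    intro r
    exact ne_of_gt (mul_pos (h1r r) (hc.trans (hdenpos c r hc)))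
  have hInt : ∀ c : ℝ, 0 < c → Integrable (stmt13F a b c) := by
    intro c hc
    refine (integrable_inv_one_add_sq.const_mul (aSup / c)).mono'
      (hcontF c hc).aestronglyMeasurable (ae_of_all _ fun r => ?_)
    rw [Real.norm_eq_abs, abs_of_pos (hFpos c r hc)]
    exact hFle c r hc
  have hIntegralU : ∀ c : ℝ, 0 < c →
      (∫ r : ℝ, aSup / c * (1 + r^2)⁻¹) = aSup * Real.pi / c := by
    intro c hc
    rw [MeasureTheory.integral_const_mul, integral_univ_inv_one_add_sq]
    ring
  have hdlt : ∀ c : ℝ, 0 < c → (∫ r : ℝ, stmt13F a b c r) < aSup * Real.pi / c := by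
    intro c hc
    have hlt : ∀ r, stmt13F a b c r < aSup / c * (1 + r^2)⁻¹ := by
      intro r
      have e : aSup / c * (1 + r^2)⁻¹ = aSup / (c * (1 + r^2)) := by field_simp
      rw [e]
      calc stmt13F a b c r
          < a r / (c * (1 + r^2)) :=
            div_lt_div_of_pos_left (lt_of_lt_of_le ha0 (haa r).1) (by positivity)
              (by nlinarith [hdenpos c r hc, h1r r])
        _ ≤ aSup / (c * (1 + r^2)) := by
            gcongr
            exact (haa r).2
    have h := stmt13_integral_lt (hInt c hc)
      (integrable_inv_one_add_sq.const_mul (aSup / c)) hlt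
    rwa [hIntegralU c hc] at h
  have hmono : ∀ c c' : ℝ, 0 < c → c < c' →
      (∫ r : ℝ, stmt13F a b c' r) < ∫ r : ℝ, stmt13F a b c r := by
    intro c c' hc hcc
    refine stmt13_integral_lt (hInt c' (hc.trans hcc)) (hInt c hc) fun r => ?_
    unfold stmt13F
    refine div_lt_div_of_pos_left (lt_of_lt_of_le ha0 (haa r).1)
      (mul_pos (h1r r) (hc.trans (hdenpos c r hc))) ?_
    nlinarith [h1r r]
  have hcont : ∀ c₀ : ℝ, 0 < c₀ →
      ContinuousAt (fun c => ∫ r : ℝ, stmt13F a b c r) c₀ := by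
    intro c₀ hc₀
    have h2 : 0 < c₀ / 2 := by linarith
    refine continuousAt_of_dominated ?_ ?_
      (bound := fun r => aSup / (c₀/2) * (1 + r^2)⁻¹)
      (integrable_inv_one_add_sq.const_mul _) ?_
    · filter_upwards [eventually_gt_nhds (by linarith : c₀/2 < c₀)] with c hc
      exact (hcontF c (h2.trans hc)).aestronglyMeasurable
    · filter_upwards [eventually_gt_nhds (by linarith : c₀/2 < c₀)] with c hc
      refine ae_of_all _ fun r => ?_
      rw [Real.norm_eq_abs, abs_of_pos (hFpos c r (h2.trans hc))]
      calc stmt13F a b c r ≤ aSup / c * (1 + r^2)⁻¹ := hFle c r (h2.trans hc)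
        _ ≤ aSup / (c₀/2) * (1 + r^2)⁻¹ := by
            gcongr
    · refine ae_of_all _ fun r => ?_
      unfold stmt13F
      refine ContinuousAt.div continuousAt_const
        (continuousAt_const.mul (continuousAt_id.sub continuousAt_const)) ?_
      exact ne_of_gt (mul_pos (h1r r) (hc₀.trans (hdenpos c₀ r hc₀)))
  -- the two endpoints
  set c1 : ℝ := (a0 + b0) / 2 with hc1def
  have hc1 : 0 < c1 := by rw [hc1def]; linarith
  set c2 : ℝ := aSup * Real.pi / 2 with hc2def
  have hc2 : 0 < c2 := by rw [hc2def]; positivity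
  have hc1c2 : c1 ≤ c2 := by
    rw [hc1def, hc2def]
    nlinarith [Real.pi_gt_three]
  have hd2 : (∫ r : ℝ, stmt13F a b c2 r) < 2 := by
    have h := hdlt c2 hc2
    have e : aSup * Real.pi / c2 = 2 := by
      rw [hc2def]
      rw [div_div_eq_mul_div, div_eq_iff (by positivity : aSup * Real.pi ≠ 0)]
      ring
    rwa [e] at h
  -- lower bound at c1
  have hd1 : 2 ≤ ∫ r : ℝ, stmt13F a b c1 r := by
    set t : ℝ := (a0 - b0) / (2 * a0) with htdef
    have ht0 : 0 < t := by rw [htdef]; apply div_pos <;> linarith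
    have ht1 : t < 1 := by
      rw [htdef, div_lt_one (by linarith)]
      linarith
    have hu : 0 < 1 - t^2 := by nlinarith
    have hsu : 0 < Real.sqrt (1 - t^2) := Real.sqrt_pos.2 hu
    set R : ℝ := t / Real.sqrt (1 - t^2) with hRdef
    have hR0 : 0 < R := div_pos ht0 hsu
    have hR2 : R^2 = t^2 / (1 - t^2) := by
      rw [hRdef, div_pow, Real.sq_sqrt hu.le]
    have h1R : 1 + R^2 = (1 - t^2)⁻¹ := by
      rw [hR2]; field_simp; ring
    have hsR : Real.sqrt (1 + R^2) = (Real.sqrt (1 - t^2))⁻¹ := by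
      rw [h1R, Real.sqrt_inv]
    have hRt : 2 * R / Real.sqrt (1 + R^2) = 2 * t := by
      rw [hsR, hRdef]
      field_simp
    have hg0cont : Continuous (fun r : ℝ => 1 / ((1 + r^2) * Real.sqrt (1 + r^2))) :=
      continuous_const.div (hcontden.mul hcontden.sqrt)
        (fun r => ne_of_gt (mul_pos (h1r r) (hs0 r)))
    have hiv : (∫ r in (-R)..R, 1 / ((1 + r^2) * Real.sqrt (1 + r^2)))
        = 2 * R / Real.sqrt (1 + R^2) := by
      rw [intervalIntegral.integral_eq_sub_of_hasDerivAt
        (fun x _ => stmt13_hasDeriv x) (hg0cont.intervalIntegrable _ _)]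
      have hnegR : ((-R):ℝ)^2 = R^2 := by ring
      rw [hnegR]
      ring
    set K : ℝ := a0 / (c1 - b0) with hKdef
    have hc1b0 : 0 < c1 - b0 := by linarith
    have hKt : K * (2 * t) = 2 := by
      rw [hKdef, htdef, hc1def]
      exact stmt13_arith a0 b0 ha0 hb0 hcond
    have hg0le : ∀ r : ℝ, K * (1 / ((1 + r^2) * Real.sqrt (1 + r^2))) ≤ stmt13F a b c1 r := by
      intro r
      have h2 : K * (1 / ((1 + r^2) * Real.sqrt (1 + r^2)))
          = a0 / ((1 + r^2) * ((c1 - b0) * Real.sqrt (1 + r^2))) := by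
        rw [hKdef, mul_one_div, div_div]
        ring_nf
      rw [h2]
      unfold stmt13F
      refine div_le_div₀ (lt_of_lt_of_le ha0 (haa r).1).le (haa r).1
        (mul_pos (h1r r) (hc1.trans (hdenpos c1 r hc1))) ?_
      have h3 : c1 - b r * Real.sqrt (1 + r^2) ≤ (c1 - b0) * Real.sqrt (1 + r^2) := by
        have k1 : 0 ≤ c1 * (Real.sqrt (1 + r^2) - 1) :=
          mul_nonneg hc1.le (sub_nonneg.2 (hs1 r))
        have k2 : 0 ≤ (b r - b0) * Real.sqrt (1 + r^2) :=
          mul_nonneg (sub_nonneg.2 (hbb r).1) (hs0 r).le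
        nlinarith [k1, k2]
      exact mul_le_mul_of_nonneg_left h3 (h1r r).le
    have hRR : -R ≤ R := by linarith
    have e1 : (∫ r in Set.Ioc (-R) R, K * (1 / ((1 + r^2) * Real.sqrt (1 + r^2))))
        = K * (2 * R / Real.sqrt (1 + R^2)) := by
      rw [← intervalIntegral.integral_of_le hRR, intervalIntegral.integral_const_mul, hiv]
    have e2 : (∫ r in Set.Ioc (-R) R, K * (1 / ((1 + r^2) * Real.sqrt (1 + r^2))))
        ≤ ∫ r in Set.Ioc (-R) R, stmt13F a b c1 r := by
      refine setIntegral_mono_on ?_ ?_ measurableSet_Ioc (fun r _ => hg0le r)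
      · exact ((continuous_const.mul hg0cont).integrableOn_Ioc)
      · exact (hInt c1 hc1).integrableOn
    have e3 : (∫ r in Set.Ioc (-R) R, stmt13F a b c1 r) ≤ ∫ r : ℝ, stmt13F a b c1 r :=
      setIntegral_le_integral (hInt c1 hc1) (ae_of_all _ fun r => (hFpos c1 r hc1).le)
    rw [hRt] at e1
    rw [hKt] at e1
    linarith
  -- intermediate value theorem
  have hcontOn : ContinuousOn (fun c => ∫ r : ℝ, stmt13F a b c r) (Set.Icc c1 c2) :=
    fun x hx => ((hcont x (lt_of_lt_of_le hc1 hx.1)).continuousWithinAt)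
  have h2mem : (2:ℝ) ∈ Set.Icc (∫ r : ℝ, stmt13F a b c2 r) (∫ r : ℝ, stmt13F a b c1 r) :=
    ⟨hd2.le, hd1⟩
  obtain ⟨cbar, hcbarmem, hcbar0⟩ := intermediate_value_Icc' hc1c2 hcontOn h2mem
  have hcbar : (∫ r : ℝ, stmt13F a b cbar r) = 2 := hcbar0
  have hcbarpos : 0 < cbar := lt_of_lt_of_le hc1 hcbarmem.1
  refine ⟨⟨cbar, ⟨hcbarpos, hcbar⟩, ?_⟩, ?_⟩
  · rintro c' ⟨hc'pos, hc'val⟩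
    by_contra hne
    rcases lt_or_gt_of_ne hne with h | h
    · have hlt := hmono c' cbar hc'pos h
      rw [hcbar, hc'val] at hlt
      exact lt_irrefl 2 hlt
    · have hlt := hmono cbar c' hcbarpos h
      rw [hcbar, hc'val] at hlt
      exact lt_irrefl 2 hlt
  · intro c hc hval
    have h := hdlt c hc
    rw [hval, lt_div_iff₀ hc] at h
    linarith

theorem stmt13 (a b : ℝ → ℝ) (ha : Continuous a) (hb : Continuous b)
    (a0 b0 aSup : ℝ) (ha0 : 0 < a0) (hb0 : b0 < 0)
    (haa : ∀ r : ℝ, a0 ≤ a r ∧ a r ≤ aSup) (hbb : ∀ r : ℝ, b0 ≤ b r ∧ b r < 0)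
    (hcond : a0 > -b0) :
    (∃! c : ℝ, 0 < c ∧
      (∫ r : ℝ, a r / ((1 + r^2) * (c - b r * Real.sqrt (1 + r^2)))) = 2) ∧
    ∀ c : ℝ, 0 < c →
      (∫ r : ℝ, a r / ((1 + r^2) * (c - b r * Real.sqrt (1 + r^2)))) = 2 →
      c < aSup * Real.pi / 2 := by
  have h := stmt13_main a b ha hb a0 b0 aSup ha0 hb0 haa hbb hcond
  simpa only [stmt13F] using h
end

section
/- Let a_0, b_0 be constants with a_0 > 0 > b_0 and let c > 0. Suppose φ, Φ₀ are C² solutions on [0, X) of φ'' = ((1+(φ')²)/a(φ'))(c - ε - b(φ')√(1+(φ')²)) and Φ₀'' = ((1+(Φ₀')²)/a_0)(c - b_0√(1+(Φ₀')²)) respectively, with φ(0) = φ'(0) = Φ₀(0) = Φ₀'(0) = 0, where a(p) ≥ a_0, b(p) ≥ b_0 for all p, and 0 < ε < c. Then φ'(x) < Φ₀'(x) for all x ∈ (0, X). -/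
open Filter Set Topology

/-- If `h` has positive derivative at `x`, then `h y < h x` for `y` slightly left of `x`. -/
lemma aux_deriv_pos_left {h : ℝ → ℝ} {d x : ℝ} (hd : HasDerivAt h d x) (hpos : 0 < d) :
    ∀ᶠ y in 𝓝[<] x, h y < h x := by
  have hs : ∀ᶠ y in 𝓝[≠] x, 0 < slope h x y :=
    (hasDerivAt_iff_tendsto_slope.mp hd).eventually (eventually_gt_nhds hpos)
  have hs' : ∀ᶠ y in 𝓝[<] x, 0 < slope h x y :=
    hs.filter_mono (nhdsWithin_mono x (fun y hy => ne_of_lt hy))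
  filter_upwards [hs', self_mem_nhdsWithin] with y hy hy'
  rw [slope_def_field] at hy
  rcases div_pos_iff.mp hy with ⟨h1, h2⟩ | ⟨h1, h2⟩
  · exfalso; exact absurd (sub_pos.mp h2) (not_lt.mpr (le_of_lt hy'))
  · linarith [sub_neg.mp h1]

/-- If `h` has positive derivative at `x`, then `h y > h x` for `y` slightly right of `x`. -/
lemma aux_deriv_pos_right {h : ℝ → ℝ} {d x : ℝ} (hd : HasDerivAt h d x) (hpos : 0 < d) :
    ∀ᶠ y in 𝓝[>] x, h x < h y := by
  have hs : ∀ᶠ y in 𝓝[≠] x, 0 < slope h x y :=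
    (hasDerivAt_iff_tendsto_slope.mp hd).eventually (eventually_gt_nhds hpos)
  have hs' : ∀ᶠ y in 𝓝[>] x, 0 < slope h x y :=
    hs.filter_mono (nhdsWithin_mono x (fun y hy => ne_of_gt hy))
  filter_upwards [hs', self_mem_nhdsWithin] with y hy hy'
  rw [slope_def_field] at hy
  rcases div_pos_iff.mp hy with ⟨h1, h2⟩ | ⟨h1, h2⟩
  · linarith [sub_pos.mp h1]
  · exfalso; exact absurd (sub_pos.mpr hy') (not_lt.mpr (le_of_lt h2))

theorem stmt14 (a b : ℝ → ℝ) (a0 b0 : ℝ) (ha0 : 0 < a0) (hb0 : b0 < 0)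
    (haa : ∀ p : ℝ, a0 ≤ a p) (hbb : ∀ p : ℝ, b0 ≤ b p)
    (c ε : ℝ) (hc : 0 < c) (hε : 0 < ε) (hεc : ε < c)
    (X : ℝ) (hX : 0 < X) (φ Φ₀ : ℝ → ℝ)
    (hφ : ContDiff ℝ 2 φ) (hΦ₀ : ContDiff ℝ 2 Φ₀)
    (hodeφ : ∀ x ∈ Set.Ico (0:ℝ) X, deriv (deriv φ) x =
      ((1 + (deriv φ x)^2) / a (deriv φ x)) *
        (c - ε - b (deriv φ x) * Real.sqrt (1 + (deriv φ x)^2)))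
    (hodeΦ : ∀ x ∈ Set.Ico (0:ℝ) X, deriv (deriv Φ₀) x =
      ((1 + (deriv Φ₀ x)^2) / a0) *
        (c - b0 * Real.sqrt (1 + (deriv Φ₀ x)^2)))
    (hφ0 : φ 0 = 0) (hφ0' : deriv φ 0 = 0)
    (hΦ0 : Φ₀ 0 = 0) (hΦ0' : deriv Φ₀ 0 = 0) :
    ∀ x ∈ Set.Ioo (0:ℝ) X, deriv φ x < deriv Φ₀ x := by
  -- Key pointwise inequality between the right-hand sides
  have key : ∀ p : ℝ, ((1 + p^2) / a p) * (c - ε - b p * Real.sqrt (1 + p^2))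
      < ((1 + p^2) / a0) * (c - b0 * Real.sqrt (1 + p^2)) := by
    intro p
    set q := Real.sqrt (1 + p^2) with hqdef
    have hq1 : 1 ≤ q := Real.one_le_sqrt.mpr (by nlinarith [sq_nonneg p])
    have hp2 : (0:ℝ) < 1 + p^2 := by positivity
    have hA : 0 < a p := lt_of_lt_of_le ha0 (haa p)
    have hrhs : 0 < c - b0 * q := by nlinarith
    rw [div_mul_eq_mul_div, div_mul_eq_mul_div, div_lt_div_iff₀ hA ha0]
    nlinarith [mul_nonneg (mul_nonneg hp2.le hrhs.le) (sub_nonneg.mpr (haa p)),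
      mul_pos (mul_pos hp2 ha0) hε,
      mul_nonneg (mul_nonneg hp2.le ha0.le)
        (mul_nonneg (sub_nonneg.mpr (hbb p)) (le_trans zero_le_one hq1))]
  -- differentiability of the derivatives
  have hφ2 : ContDiff ℝ ((1:ℕ∞)+1) φ := by convert hφ using 2; norm_num
  have hΦ2 : ContDiff ℝ ((1:ℕ∞)+1) Φ₀ := by convert hΦ₀ using 2; norm_num
  have hf : Differentiable ℝ (deriv φ) :=
    ((contDiff_succ_iff_deriv.mp hφ2).2.2).differentiable (by simp)
  have hg : Differentiable ℝ (deriv Φ₀) :=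
    ((contDiff_succ_iff_deriv.mp hΦ2).2.2).differentiable (by simp)
  set h : ℝ → ℝ := fun x => deriv Φ₀ x - deriv φ x with hhdef
  have hh' : ∀ x, HasDerivAt h (deriv (deriv Φ₀) x - deriv (deriv φ) x) x := fun x =>
    ((hg x).hasDerivAt).sub ((hf x).hasDerivAt)
  have hhc : Continuous h := (hg.continuous).sub (hf.continuous)
  -- positivity of h' where the first derivatives agree
  have hsign : ∀ x ∈ Set.Ico (0:ℝ) X, deriv φ x = deriv Φ₀ x →
      0 < deriv (deriv Φ₀) x - deriv (deriv φ) x := by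
    intro x hx heq
    rw [hodeφ x hx, hodeΦ x hx, heq]
    linarith [key (deriv Φ₀ x)]
  -- h has positive derivative at 0
  have h0 : h 0 = 0 := by simp [hhdef, hφ0', hΦ0']
  have hd0 : 0 < deriv (deriv Φ₀) 0 - deriv (deriv φ) 0 :=
    hsign 0 ⟨le_refl 0, hX⟩ (by rw [hφ0', hΦ0'])
  -- hence h > 0 just to the right of 0
  have hright : ∀ᶠ y in 𝓝[>] (0:ℝ), 0 < h y := by
    filter_upwards [aux_deriv_pos_right (hh' 0) hd0] with y hy
    rwa [h0] at hy
  obtain ⟨δ, hδpos, hδ⟩ := mem_nhdsGT_iff_exists_Ioo_subset.mp hright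
  have hδ0 : (0:ℝ) < δ := hδpos
  -- main claim: 0 < h x on (0, X)
  intro x₀ hx₀
  by_contra hcon
  push_neg at hcon
  have hhx₀ : h x₀ ≤ 0 := by simp [hhdef]; linarith
  have hx₀δ : δ ≤ x₀ := by
    by_contra hlt
    push_neg at hlt
    exact absurd (hδ ⟨hx₀.1, hlt⟩) (not_lt.mpr hhx₀)
  -- the first point ≥ δ/2 where h ≤ 0
  set S : Set ℝ := Set.Icc (δ/2) x₀ ∩ h ⁻¹' Set.Iic 0 with hSdef
  have hSclosed : IsClosed S := isClosed_Icc.inter (isClosed_Iic.preimage hhc)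
  have hSne : S.Nonempty := ⟨x₀, ⟨by constructor <;> linarith, hhx₀⟩⟩
  have hSbdd : BddBelow S := ⟨δ/2, fun y hy => hy.1.1⟩
  set x₁ := sInf S with hx₁def
  have hx₁S : x₁ ∈ S := hSclosed.csInf_mem hSne hSbdd
  have hx₁pos : 0 < x₁ := lt_of_lt_of_le (by linarith) hx₁S.1.1
  have hx₁lt : x₁ < X := lt_of_le_of_lt hx₁S.1.2 hx₀.2
  -- h > 0 on (0, x₁)
  have hposIoo : ∀ y ∈ Set.Ioo (0:ℝ) x₁, 0 < h y := by
    intro y hy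
    rcases lt_or_ge y δ with hyδ | hyδ
    · exact hδ ⟨hy.1, hyδ⟩
    · by_contra hle
      push_neg at hle
      have : y ∈ S := ⟨⟨by linarith, le_trans hy.2.le hx₁S.1.2⟩, hle⟩
      exact absurd (csInf_le hSbdd this) (not_le.mpr hy.2)
  -- h x₁ = 0 by left-continuity
  have hmemIoo : ∀ᶠ y in 𝓝[<] x₁, y ∈ Set.Ioo (0:ℝ) x₁ := by
    filter_upwards [self_mem_nhdsWithin,
      eventually_nhdsWithin_of_eventually_nhds (eventually_gt_nhds hx₁pos)] with y h1 h2
    exact ⟨h2, h1⟩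
  have hx₁0 : h x₁ = 0 := by
    refine le_antisymm hx₁S.2 ?_
    have htend : Tendsto h (𝓝[<] x₁) (𝓝 (h x₁)) :=
      (hhc.continuousAt).continuousWithinAt.tendsto
    have hev : ∀ᶠ y in 𝓝[<] x₁, 0 ≤ h y := by
      filter_upwards [hmemIoo] with y hy
      exact (hposIoo y hy).le
    exact ge_of_tendsto htend hev
  -- derivative of h at x₁ is positive, contradiction
  have heq : deriv φ x₁ = deriv Φ₀ x₁ := by
    have : deriv Φ₀ x₁ - deriv φ x₁ = 0 := hx₁0
    linarith
  have hd1 : 0 < deriv (deriv Φ₀) x₁ - deriv (deriv φ) x₁ :=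
    hsign x₁ ⟨hx₁pos.le, hx₁lt⟩ heq
  have hlt : ∀ᶠ y in 𝓝[<] x₁, h y < 0 := by
    filter_upwards [aux_deriv_pos_left (hh' x₁) hd1] with y hy
    rwa [hx₁0] at hy
  obtain ⟨y, hy1, hy2⟩ := (hlt.and hmemIoo).exists
  exact absurd (hposIoo y hy2) (not_lt.mpr hy1.le)
end

section
/- Let a, b : ℝ → ℝ with 0 < a(p) ≤ a⁰ and b⁰ ≤ b(p) < 0 (where b⁰ = sup b < 0), let c > 0, and let φ : [0, X⁺) → ℝ be a strictly convex C² solution of c = a(φ')φ''/(1+(φ')²) + b(φ')√(1+(φ')²) with φ(0) = φ'(0) = 0 and φ'(x) → +∞ as x → X⁺. Then lim_{x→X⁺} φ(x) ≤ a⁰/(-b⁰). -/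
open Filter

theorem stmt16 (a b : ℝ → ℝ) (aSup bSup : ℝ)
    (hA : ∀ p : ℝ, 0 < a p ∧ a p ≤ aSup)
    (hB : ∀ p : ℝ, b p ≤ bSup ∧ b p < 0) (hbSup : bSup < 0)
    (c : ℝ) (hc : 0 < c) (Xp : ℝ) (hXp : 0 < Xp)
    (φ φ' φ'' : ℝ → ℝ)
    (hd : ∀ x ∈ Set.Ico (0:ℝ) Xp, HasDerivAt φ (φ' x) x)
    (hd' : ∀ x ∈ Set.Ico (0:ℝ) Xp, HasDerivAt φ' (φ'' x) x)
    (hode : ∀ x ∈ Set.Ico (0:ℝ) Xp,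
      c = a (φ' x) * φ'' x / (1 + (φ' x)^2) + b (φ' x) * Real.sqrt (1 + (φ' x)^2))
    (hconv : ∀ x ∈ Set.Ico (0:ℝ) Xp, 0 < φ'' x)
    (h0 : φ 0 = 0) (h0' : φ' 0 = 0)
    (hblow : Tendsto φ' (nhdsWithin Xp (Set.Iio Xp)) atTop)
    (L : ℝ) (hL : Tendsto φ (nhdsWithin Xp (Set.Iio Xp)) (nhds L)) :
    L ≤ aSup / (-bSup) := by
  set M := aSup / (-bSup) with hM
  have hbS : 0 < -bSup := by linarith
  have hA0 : 0 < aSup := lt_of_lt_of_le (hA 0).1 (hA 0).2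
  have hMpos : 0 < M := div_pos hA0 hbS
  have h0mem : (0:ℝ) ∈ Set.Ico (0:ℝ) Xp := ⟨le_refl 0, hXp⟩
  -- φ' is nonneg on [0, Xp)
  have hcont' : ContinuousOn φ' (Set.Ico 0 Xp) :=
    fun x hx => ((hd' x hx).continuousAt).continuousWithinAt
  have hmono : MonotoneOn φ' (Set.Ico 0 Xp) := by
    apply monotoneOn_of_deriv_nonneg (convex_Ico 0 Xp) hcont'
    · intro x hx
      rw [interior_Ico] at hx
      exact ((hd' x (Set.Ioo_subset_Ico_self hx)).differentiableAt).differentiableWithinAt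
    · intro x hx
      rw [interior_Ico] at hx
      rw [(hd' x (Set.Ioo_subset_Ico_self hx)).deriv]
      exact (hconv x (Set.Ioo_subset_Ico_self hx)).le
  have hp' : ∀ x ∈ Set.Ico (0:ℝ) Xp, 0 ≤ φ' x := by
    intro x hx
    have := hmono h0mem hx hx.1
    rwa [h0'] at this
  -- key curvature inequality
  have hkey : ∀ x ∈ Set.Ico (0:ℝ) Xp,
      (-bSup) * ((1 + (φ' x)^2) * Real.sqrt (1 + (φ' x)^2)) ≤ aSup * φ'' x := by
    intro x hx
    set p := φ' x
    have hu : (0:ℝ) < 1 + p^2 := by positivity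
    have hs : 0 < Real.sqrt (1 + p^2) := Real.sqrt_pos.mpr hu
    have hode' := hode x hx
    have haode : a p * φ'' x = (c - b p * Real.sqrt (1 + p^2)) * (1 + p^2) := by
      field_simp at hode' ⊢
      linarith [hode']
    have hb1 := (hB p).1
    have hb2 := (hB p).2
    have ha1 := (hA p).1
    have ha2 := (hA p).2
    have hφ := hconv x hx
    nlinarith [mul_le_mul_of_nonneg_right hb1 hs.le,
      mul_pos hu hc, mul_le_mul_of_nonneg_right ha2 hφ.le,
      mul_pos hs hu]
  -- the comparison function F
  set F : ℝ → ℝ := fun y => M * (1 - (Real.sqrt (1 + (φ' y)^2))⁻¹) - φ y with hF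
  have hFd : ∀ x ∈ Set.Ico (0:ℝ) Xp,
      HasDerivAt F (M * -(-((2:ℕ) * φ' x ^ (2-1) * φ'' x / (2 * Real.sqrt (1 + (φ' x)^2))) /
        (Real.sqrt (1 + (φ' x)^2))^2) - φ' x) x := by
    intro x hx
    have hu : (0:ℝ) < 1 + (φ' x)^2 := by positivity
    have hs : 0 < Real.sqrt (1 + (φ' x)^2) := Real.sqrt_pos.mpr hu
    have h1 : HasDerivAt (fun y => 1 + (φ' y)^2) ((2:ℕ) * φ' x ^ (2-1) * φ'' x) x :=
      ((hd' x hx).pow 2).const_add 1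
    have h2 := (h1.sqrt hu.ne')
    have h3 := h2.inv hs.ne'
    have h4 := (h3.const_sub 1).const_mul M
    exact h4.sub (hd x hx)
  have hFd' : ∀ x ∈ Set.Ico (0:ℝ) Xp,
      0 ≤ M * -(-((2:ℕ) * φ' x ^ (2-1) * φ'' x / (2 * Real.sqrt (1 + (φ' x)^2))) /
        (Real.sqrt (1 + (φ' x)^2))^2) - φ' x := by
    intro x hx
    have hu : (0:ℝ) < 1 + (φ' x)^2 := by positivity
    have hs : 0 < Real.sqrt (1 + (φ' x)^2) := Real.sqrt_pos.mpr hu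
    have hsq : Real.sqrt (1 + (φ' x)^2) ^ 2 = 1 + (φ' x)^2 := Real.sq_sqrt hu.le
    have hk := hkey x hx
    have hp := hp' x hx
    have hMk : (1 + (φ' x)^2) * Real.sqrt (1 + (φ' x)^2) ≤ M * φ'' x := by
      rw [hM, div_mul_eq_mul_div, le_div_iff₀ hbS]
      nlinarith [hk]
    -- target: φ' x ≤ M * (φ' x * φ'' x / √u / u)
    have hgoal : φ' x * ((1 + (φ' x)^2) * Real.sqrt (1 + (φ' x)^2)) ≤ φ' x * (M * φ'' x) :=
      mul_le_mul_of_nonneg_left hMk hp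
    rw [neg_div, neg_neg, div_div, sub_nonneg, ← mul_div_assoc,
      le_div_iff₀ (by positivity), hsq]
    push_cast
    norm_num
    nlinarith [hgoal, hs, hu]
  have hFmono : MonotoneOn F (Set.Ico 0 Xp) := by
    apply monotoneOn_of_deriv_nonneg (convex_Ico 0 Xp)
    · exact fun x hx => ((hFd x hx).continuousAt).continuousWithinAt
    · intro x hx
      rw [interior_Ico] at hx
      exact ((hFd x (Set.Ioo_subset_Ico_self hx)).differentiableAt).differentiableWithinAt
    · intro x hx
      rw [interior_Ico] at hx
      rw [(hFd x (Set.Ioo_subset_Ico_self hx)).deriv]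
      exact hFd' x (Set.Ioo_subset_Ico_self hx)
  have hF0 : F 0 = 0 := by
    simp [hF, h0, h0', Real.sqrt_one]
  have hbound : ∀ x ∈ Set.Ico (0:ℝ) Xp, φ x ≤ M := by
    intro x hx
    have h1 : F 0 ≤ F x := hFmono h0mem hx hx.1
    rw [hF0] at h1
    have hu : (0:ℝ) < 1 + (φ' x)^2 := by positivity
    have hs : 0 < Real.sqrt (1 + (φ' x)^2) := Real.sqrt_pos.mpr hu
    have hinv : 0 ≤ (Real.sqrt (1 + (φ' x)^2))⁻¹ := by positivity
    have : φ x ≤ M * (1 - (Real.sqrt (1 + (φ' x)^2))⁻¹) := by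
      simp only [hF] at h1; linarith
    nlinarith [hMpos, hinv]
  have hev : ∀ᶠ x in nhdsWithin Xp (Set.Iio Xp), φ x ≤ M := by
    filter_upwards [Ioo_mem_nhdsLT hXp] with x hx
    exact hbound x ⟨hx.1.le, hx.2⟩
  exact le_of_tendsto hL hev
end
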